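/- arXiv:2503.16105 — 3 statements merged into one kernel-verified Lean document; each statement's English description precedes it below -/
import Mathlib

section
/- Let Ω ⊆ ℝ^N be measurable, u ∈ 𝓜(Ω), and (u_n) ⊂ 𝓜(Ω) a sequence with ‖u_n − u‖_{𝓛(Ω)} → 0 as n → ∞. Then for every α > 0, lim_{n→∞} ∫_Ω ( e^{α (u_n − u)²} − 1 ) dx = 0. -/
/-! Write `Φ(s) = e^{s²} − 1` and `ρ(w, k) = ∫ Φ(w / k)` (`expModular`). By convexity of
`exp`, `e^{t s} − 1 ≤ t (e^s − 1)` for `t ∈ [0, 1]`, so if `ρ(w, k) ≤ 1` and `α k² ≤ 1` then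
`∫ (e^{α w²} − 1) ≤ α k² ρ(w, k) ≤ α k²`. Taking `k` just above `‖u_n − u‖_𝓛` makes the
right-hand side tend to `0`. The same convexity bound shows that the admissible set of the
Luxemburg norm is nonempty once `ρ(w, k₀) < ∞` for a single `k₀`, which for `w = u_n − u`
follows from `Φ((a − b)/2) ≤ Φ(a) + Φ(b)`. -/

open MeasureTheory Filter

/-- The Luxemburg norm ‖u‖_{𝓛} := inf{ k > 0 : ∫ (e^{(u/k)²} − 1) dμ ≤ 1 }. -/
noncomputable def luxNorm {α : Type*} [MeasurableSpace α] (μ : Measure α) (u : α → ℝ) : ℝ :=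
  sInf {k : ℝ | 0 < k ∧ ∫⁻ x, ENNReal.ofReal (Real.exp ((u x / k) ^ 2) - 1) ∂μ ≤ 1}

open scoped ENNReal

noncomputable def expModular {X : Type*} [MeasurableSpace X] (μ : Measure X) (w : X → ℝ)
    (k : ℝ) : ℝ≥0∞ :=
  ∫⁻ x, ENNReal.ofReal (Real.exp ((w x / k) ^ 2) - 1) ∂μ

lemma Real.exp_mul_sub_one_le {t : ℝ} (ht0 : 0 ≤ t) (ht1 : t ≤ 1) (s : ℝ) :
    Real.exp (t * s) - 1 ≤ t * (Real.exp s - 1) := by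
  have h := convexOn_exp.2 (Set.mem_univ s) (Set.mem_univ 0) ht0 (sub_nonneg.2 ht1)
    (add_sub_cancel t 1)
  simp only [smul_eq_mul, mul_zero, add_zero, Real.exp_zero, mul_one] at h
  linarith

lemma Real.exp_sq_half_sub_sub_one_le (a b : ℝ) :
    Real.exp (((a - b) / 2) ^ 2) - 1 ≤ (Real.exp (a ^ 2) - 1) + (Real.exp (b ^ 2) - 1) := by
  have hsq : ((a - b) / 2) ^ 2 ≤ (1 / 2 : ℝ) * a ^ 2 + (1 / 2 : ℝ) * b ^ 2 := by
    nlinarith [sq_nonneg (a + b)]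
  have hconv := convexOn_exp.2 (Set.mem_univ (a ^ 2)) (Set.mem_univ (b ^ 2))
    (by norm_num : (0 : ℝ) ≤ 1 / 2) (by norm_num : (0 : ℝ) ≤ 1 / 2) (by norm_num)
  simp only [smul_eq_mul] at hconv
  linarith [Real.exp_le_exp.2 hsq, Real.one_le_exp (sq_nonneg a),
    Real.one_le_exp (sq_nonneg b)]

section expModular

variable {X : Type*} [MeasurableSpace X] {μ : Measure X}

lemma lintegral_exp_mul_sub_one_le {t : ℝ} (ht0 : 0 ≤ t) (ht1 : t ≤ 1) (f : X → ℝ) :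
    ∫⁻ x, ENNReal.ofReal (Real.exp (t * f x) - 1) ∂μ
      ≤ ENNReal.ofReal t * ∫⁻ x, ENNReal.ofReal (Real.exp (f x) - 1) ∂μ :=
  calc ∫⁻ x, ENNReal.ofReal (Real.exp (t * f x) - 1) ∂μ
      ≤ ∫⁻ x, ENNReal.ofReal t * ENNReal.ofReal (Real.exp (f x) - 1) ∂μ :=
        lintegral_mono fun x => by
          rw [← ENNReal.ofReal_mul ht0]
          exact ENNReal.ofReal_le_ofReal (Real.exp_mul_sub_one_le ht0 ht1 _)
    _ = _ := lintegral_const_mul' _ _ ENNReal.ofReal_ne_top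

lemma expModular_mul_le (w : X → ℝ) {c k : ℝ} (hc : 1 ≤ c) :
    expModular μ w (c * k) ≤ ENNReal.ofReal (c ^ 2)⁻¹ * expModular μ w k := by
  have hscale : ∀ x, (w x / (c * k)) ^ 2 = (c ^ 2)⁻¹ * (w x / k) ^ 2 := fun x => by ring
  simp only [expModular, hscale]
  exact lintegral_exp_mul_sub_one_le (by positivity)
    (inv_le_one_of_one_le₀ (one_le_pow₀ hc)) _

lemma lintegral_exp_mul_sq_sub_one_le_mul_expModular (w : X → ℝ) {α k : ℝ} (hα : 0 ≤ α)
    (hk : 0 < k) (hαk : α * k ^ 2 ≤ 1) :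
    ∫⁻ x, ENNReal.ofReal (Real.exp (α * w x ^ 2) - 1) ∂μ
      ≤ ENNReal.ofReal (α * k ^ 2) * expModular μ w k := by
  have hscale : ∀ x, α * w x ^ 2 = α * k ^ 2 * (w x / k) ^ 2 := fun x => by field_simp
  simp only [expModular, hscale]
  exact lintegral_exp_mul_sub_one_le (by positivity) hαk _

lemma exists_expModular_le_one {w : X → ℝ} {k₀ : ℝ} (hk₀ : 0 < k₀)
    (hfin : expModular μ w k₀ ≠ ⊤) : ∃ k, 0 < k ∧ expModular μ w k ≤ 1 := by
  set c := (expModular μ w k₀).toReal + 1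
  have hc : 1 ≤ c := le_add_of_nonneg_left ENNReal.toReal_nonneg
  have hle : expModular μ w k₀ ≤ ENNReal.ofReal (c ^ 2) := by
    rw [← ENNReal.ofReal_toReal hfin]
    exact ENNReal.ofReal_le_ofReal (by nlinarith)
  refine ⟨c * k₀, by positivity, (expModular_mul_le w hc).trans ?_⟩
  rw [ENNReal.ofReal_inv_of_pos (by positivity)]
  exact (ENNReal.inv_mul_le_iff (by positivity) ENNReal.ofReal_ne_top).2 (by simpa using hle)

lemma exists_expModular_le_one_of_luxNorm_lt {w : X → ℝ}
    (hfin : ∃ k₀, 0 < k₀ ∧ expModular μ w k₀ ≠ ⊤) {δ : ℝ} (hδ : luxNorm μ w < δ) :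
    ∃ k, 0 < k ∧ k < δ ∧ expModular μ w k ≤ 1 := by
  obtain ⟨k₀, hk₀, hfin⟩ := hfin
  obtain ⟨k, ⟨hk, hle⟩, hlt⟩ := exists_lt_of_csInf_lt (exists_expModular_le_one hk₀ hfin) hδ
  exact ⟨k, hk, hlt, hle⟩

lemma lintegral_exp_mul_sq_sub_one_le {w : X → ℝ}
    (hfin : ∃ k₀, 0 < k₀ ∧ expModular μ w k₀ ≠ ⊤) {α k : ℝ} (hα : 0 ≤ α)
    (hk : luxNorm μ w < k) (hαk : α * k ^ 2 ≤ 1) :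
    ∫⁻ x, ENNReal.ofReal (Real.exp (α * w x ^ 2) - 1) ∂μ ≤ ENNReal.ofReal (α * k ^ 2) := by
  obtain ⟨k', hk', hk'k, hle⟩ := exists_expModular_le_one_of_luxNorm_lt hfin hk
  have hsq : α * k' ^ 2 ≤ α * k ^ 2 := by gcongr
  calc ∫⁻ x, ENNReal.ofReal (Real.exp (α * w x ^ 2) - 1) ∂μ
      ≤ ENNReal.ofReal (α * k' ^ 2) * expModular μ w k' :=
        lintegral_exp_mul_sq_sub_one_le_mul_expModular w hα hk' (hsq.trans hαk)
    _ ≤ ENNReal.ofReal (α * k' ^ 2) * 1 := by gcongr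
    _ ≤ ENNReal.ofReal (α * k ^ 2) := by rw [mul_one]; exact ENNReal.ofReal_le_ofReal hsq

lemma expModular_sub_le {f : X → ℝ} (hf : Measurable f) (g : X → ℝ) (k : ℝ) :
    expModular μ (fun x => f x - g x) (2 * k) ≤ expModular μ f k + expModular μ g k :=
  calc expModular μ (fun x => f x - g x) (2 * k)
      ≤ ∫⁻ x, (ENNReal.ofReal (Real.exp ((f x / k) ^ 2) - 1)
          + ENNReal.ofReal (Real.exp ((g x / k) ^ 2) - 1)) ∂μ :=
        lintegral_mono fun x => by
          rw [show (f x - g x) / (2 * k) = (f x / k - g x / k) / 2 by ring]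
          exact (ENNReal.ofReal_le_ofReal (Real.exp_sq_half_sub_sub_one_le _ _)).trans
            ENNReal.ofReal_add_le
    _ = expModular μ f k + expModular μ g k := lintegral_add_left (by fun_prop) _

theorem tendsto_lintegral_exp_mul_sq_sub_one {w : ℕ → X → ℝ}
    (hfin : ∀ n, ∃ k₀, 0 < k₀ ∧ expModular μ (w n) k₀ ≠ ⊤)
    (hlux : Tendsto (fun n => luxNorm μ (w n)) atTop (nhds 0)) {α : ℝ} (hα : 0 ≤ α) :
    Tendsto (fun n => ∫⁻ x, ENNReal.ofReal (Real.exp (α * w n x ^ 2) - 1) ∂μ)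
      atTop (nhds 0) := by
  set k : ℕ → ℝ := fun n => luxNorm μ (w n) + 1 / ((n : ℝ) + 1)
  have hk : Tendsto k atTop (nhds 0) := by
    simpa only [add_zero] using hlux.add tendsto_one_div_add_atTop_nhds_zero_nat
  have hbound : Tendsto (fun n => α * k n ^ 2) atTop (nhds 0) := by
    simpa using (hk.pow 2).const_mul α
  have hsmall : ∀ᶠ n in atTop, α * k n ^ 2 ≤ 1 :=
    hbound.eventually (ge_mem_nhds zero_lt_one)
  refine tendsto_of_tendsto_of_tendsto_of_le_of_le' tendsto_const_nhds
    (by simpa using ENNReal.tendsto_ofReal hbound) (Eventually.of_forall fun _ => zero_le) ?_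
  filter_upwards [hsmall] with n hn
  exact lintegral_exp_mul_sq_sub_one_le (hfin n) hα
    (lt_add_of_pos_right _ Nat.one_div_pos_of_nat) hn

end expModular

theorem stmt_2_general {N : ℕ} (Ω : Set (EuclideanSpace ℝ (Fin N)))
    (u : EuclideanSpace ℝ (Fin N) → ℝ) (un : ℕ → EuclideanSpace ℝ (Fin N) → ℝ)
    (hun : ∀ n, Measurable (un n))
    (huM : ∀ k : ℝ, 0 < k →
      ∫⁻ x in Ω, ENNReal.ofReal (Real.exp ((u x / k) ^ 2) - 1) < ⊤)
    (hunM : ∀ n, ∀ k : ℝ, 0 < k →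
      ∫⁻ x in Ω, ENNReal.ofReal (Real.exp ((un n x / k) ^ 2) - 1) < ⊤)
    (hlux : Tendsto (fun n => luxNorm (volume.restrict Ω) (fun x => un n x - u x))
      atTop (nhds 0)) :
    ∀ α : ℝ, 0 < α →
      Tendsto (fun n => ∫⁻ x in Ω,
          ENNReal.ofReal (Real.exp (α * (un n x - u x) ^ 2) - 1))
        atTop (nhds 0) := by
  intro α hα
  have hfin : ∀ n, ∃ k₀, 0 < k₀ ∧
      expModular (volume.restrict Ω) (fun x => un n x - u x) k₀ ≠ ⊤ := fun n =>
    ⟨2 * 1, by norm_num, ne_top_of_le_ne_top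
      (ENNReal.add_ne_top.2 ⟨(hunM n 1 one_pos).ne, (huM 1 one_pos).ne⟩)
      (expModular_sub_le (hun n) u 1)⟩
  exact tendsto_lintegral_exp_mul_sq_sub_one hfin hlux hα.le

/-- Let Ω ⊆ ℝ^N be measurable, u ∈ 𝓜(Ω), and (u_n) ⊂ 𝓜(Ω) with ‖u_n − u‖_{𝓛(Ω)} → 0.
Then for every α > 0, ∫_Ω (e^{α (u_n − u)²} − 1) dx → 0. -/
theorem stmt_2 {N : ℕ} (Ω : Set (EuclideanSpace ℝ (Fin N))) (hΩ : MeasurableSet Ω)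
    (u : EuclideanSpace ℝ (Fin N) → ℝ) (un : ℕ → EuclideanSpace ℝ (Fin N) → ℝ)
    (hu : Measurable u) (hun : ∀ n, Measurable (un n))
    (huM : ∀ k : ℝ, 0 < k →
      ∫⁻ x in Ω, ENNReal.ofReal (Real.exp ((u x / k) ^ 2) - 1) < ⊤)
    (hunM : ∀ n, ∀ k : ℝ, 0 < k →
      ∫⁻ x in Ω, ENNReal.ofReal (Real.exp ((un n x / k) ^ 2) - 1) < ⊤)
    (hlux : Tendsto (fun n => luxNorm (volume.restrict Ω) (fun x => un n x - u x))
      atTop (nhds 0)) :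
    ∀ α : ℝ, 0 < α →
      Tendsto (fun n => ∫⁻ x in Ω,
          ENNReal.ofReal (Real.exp (α * (un n x - u x) ^ 2) - 1))
        atTop (nhds 0) :=
  stmt_2_general Ω u un hun huM hunM hlux
end

section
/- Let Ω ⊆ ℝ^N be measurable, u ∈ 𝓜(Ω), and (u_n) ⊂ 𝓜(Ω) a sequence with ‖u_n − u‖_{𝓛(Ω)} → 0 as n → ∞. Then for every α > 0, lim_{n→∞} ∫_Ω ( e^{α u_n²} − 1 ) dx = ∫_Ω ( e^{α u²} − 1 ) dx. -/
/-!
For `0 < t < 1`, convexity of `x ↦ x²` and of `exp` give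
`e^{β(f+g)²} - 1 ≤ (1-t)(e^{β f²/(1-t)²} - 1) + t(e^{β g²/t²} - 1)`.
With `f = u`, `g = uₙ - u` this bounds `∫ (e^{α uₙ²} - 1)` by `∫ (e^{α u²/(1-t)²} - 1)` plus a
term that vanishes as `n → ∞`: if `‖v‖ < δ` then `∫ (e^{β v²} - 1) ≤ β δ²` whenever `β δ² ≤ 1`,
again by convexity of `exp`. Exchanging the roles of `u` and `uₙ` gives the lower bound
`∫ (e^{α(1-t)² u²} - 1)`, and both bounds tend to `∫ (e^{α u²} - 1)` as `t → 0` by dominated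
convergence, since `u ∈ 𝓜`.
-/

open MeasureTheory Filter

open ENNReal Topology

section ExpSqIntegral

variable {X : Type*} [MeasurableSpace X] {μ : Measure X}

noncomputable def expSqIntegral (μ : Measure X) (β : ℝ) (w : X → ℝ) : ℝ≥0∞ :=
  ∫⁻ x, ENNReal.ofReal (Real.exp (β * w x ^ 2) - 1) ∂μ

lemma measurable_expSq {w : X → ℝ} (hw : Measurable w) (β : ℝ) :
    Measurable fun x => ENNReal.ofReal (Real.exp (β * w x ^ 2) - 1) := by
  fun_prop

lemma lintegral_exp_div_sq (w : X → ℝ) (k : ℝ) :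
    ∫⁻ x, ENNReal.ofReal (Real.exp ((w x / k) ^ 2) - 1) ∂μ = expSqIntegral μ (k ^ 2)⁻¹ w := by
  simp only [expSqIntegral, div_eq_inv_mul, mul_pow, inv_pow]

lemma expSqIntegral_ne_top_of_lintegral_div_sq_lt_top
    {w : X → ℝ} (h : ∀ k : ℝ, 0 < k → ∫⁻ x, ENNReal.ofReal (Real.exp ((w x / k) ^ 2) - 1) ∂μ < ⊤)
    {β : ℝ} (hβ : 0 < β) : expSqIntegral μ β w ≠ ⊤ := by
  have hk := h (Real.sqrt β)⁻¹ (by positivity)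
  rw [lintegral_exp_div_sq, inv_pow, inv_inv, Real.sq_sqrt hβ.le] at hk
  exact hk.ne

lemma expSqIntegral_neg (β : ℝ) (w : X → ℝ) :
    expSqIntegral μ β (fun x => -w x) = expSqIntegral μ β w := by
  simp only [expSqIntegral, neg_sq]

lemma expSqIntegral_sub_comm (β : ℝ) (f g : X → ℝ) :
    expSqIntegral μ β (fun x => f x - g x) = expSqIntegral μ β (fun x => g x - f x) := by
  simp only [expSqIntegral, sub_sq_comm]

lemma expSqIntegral_mono {β γ : ℝ} (h : β ≤ γ) (w : X → ℝ) :
    expSqIntegral μ β w ≤ expSqIntegral μ γ w :=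
  lintegral_mono fun _ => ENNReal.ofReal_le_ofReal (by gcongr)

lemma Real.exp_mul_sub_one_le_s3 {θ : ℝ} (hθ0 : 0 ≤ θ) (hθ1 : θ ≤ 1) (s : ℝ) :
    Real.exp (θ * s) - 1 ≤ θ * (Real.exp s - 1) := by
  have h := convexOn_exp.2 (Set.mem_univ s) (Set.mem_univ 0) hθ0 (sub_nonneg.2 hθ1)
    (add_sub_cancel θ 1)
  simp only [smul_eq_mul, mul_zero, add_zero, Real.exp_zero, mul_one] at h
  linarith

lemma expSqIntegral_mul_le {θ : ℝ} (hθ0 : 0 ≤ θ) (hθ1 : θ ≤ 1) (β : ℝ) (w : X → ℝ) :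
    expSqIntegral μ (θ * β) w ≤ ENNReal.ofReal θ * expSqIntegral μ β w := by
  rw [expSqIntegral, expSqIntegral, ← lintegral_const_mul' _ _ ofReal_ne_top]
  refine lintegral_mono fun x => ?_
  rw [← ENNReal.ofReal_mul hθ0, mul_assoc]
  exact ENNReal.ofReal_le_ofReal (Real.exp_mul_sub_one_le_s3 hθ0 hθ1 _)

lemma Real.exp_mul_add_sq_sub_one_le {β t : ℝ} (hβ : 0 ≤ β) (ht0 : 0 < t) (ht1 : t < 1)
    (a b : ℝ) :
    Real.exp (β * (a + b) ^ 2) - 1 ≤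
      (1 - t) * (Real.exp (β / (1 - t) ^ 2 * a ^ 2) - 1)
        + t * (Real.exp (β / t ^ 2 * b ^ 2) - 1) := by
  have hs : 0 < 1 - t := sub_pos.2 ht1
  have hsq : (a + b) ^ 2 ≤ (1 - t) * (a / (1 - t)) ^ 2 + t * (b / t) ^ 2 := by
    have := (even_two.convexOn_pow (𝕜 := ℝ)).2 (Set.mem_univ (a / (1 - t)))
      (Set.mem_univ (b / t)) hs.le ht0.le (sub_add_cancel 1 t)
    simpa only [smul_eq_mul, mul_div_cancel₀ _ hs.ne', mul_div_cancel₀ _ ht0.ne'] using this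
  have hexp := convexOn_exp.2 (Set.mem_univ (β / (1 - t) ^ 2 * a ^ 2))
    (Set.mem_univ (β / t ^ 2 * b ^ 2)) hs.le ht0.le (sub_add_cancel 1 t)
  simp only [smul_eq_mul] at hexp
  have hle : β * (a + b) ^ 2 ≤
      (1 - t) * (β / (1 - t) ^ 2 * a ^ 2) + t * (β / t ^ 2 * b ^ 2) := by
    calc β * (a + b) ^ 2 ≤ β * ((1 - t) * (a / (1 - t)) ^ 2 + t * (b / t) ^ 2) := by gcongr
      _ = _ := by field_simp
  linarith [Real.exp_le_exp.2 hle]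

lemma expSqIntegral_add_le {f : X → ℝ} (hf : Measurable f) (g : X → ℝ) {β t : ℝ} (hβ : 0 ≤ β)
    (ht0 : 0 < t) (ht1 : t < 1) :
    expSqIntegral μ β (fun x => f x + g x) ≤
      ENNReal.ofReal (1 - t) * expSqIntegral μ (β / (1 - t) ^ 2) f
        + ENNReal.ofReal t * expSqIntegral μ (β / t ^ 2) g := by
  rw [expSqIntegral, expSqIntegral, expSqIntegral,
    ← lintegral_const_mul' _ _ ofReal_ne_top, ← lintegral_const_mul' _ _ ofReal_ne_top,
    ← lintegral_add_left ((measurable_expSq hf _).const_mul _)]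
  refine lintegral_mono fun x => ?_
  have h1 : 0 ≤ Real.exp (β / (1 - t) ^ 2 * f x ^ 2) - 1 := by
    linarith [Real.one_le_exp (by positivity : 0 ≤ β / (1 - t) ^ 2 * f x ^ 2)]
  have h2 : 0 ≤ Real.exp (β / t ^ 2 * g x ^ 2) - 1 := by
    linarith [Real.one_le_exp (by positivity : 0 ≤ β / t ^ 2 * g x ^ 2)]
  rw [← ENNReal.ofReal_mul (by linarith), ← ENNReal.ofReal_mul ht0.le,
    ← ENNReal.ofReal_add (mul_nonneg (by linarith) h1) (mul_nonneg ht0.le h2)]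
  exact ENNReal.ofReal_le_ofReal (Real.exp_mul_add_sq_sub_one_le hβ ht0 ht1 _ _)

lemma expSqIntegral_sub_ne_top {f g : X → ℝ} (hf : Measurable f)
    (hf_fin : ∀ β : ℝ, 0 < β → expSqIntegral μ β f ≠ ⊤)
    (hg_fin : ∀ β : ℝ, 0 < β → expSqIntegral μ β g ≠ ⊤) {β : ℝ} (hβ : 0 < β) :
    expSqIntegral μ β (fun x => f x - g x) ≠ ⊤ := by
  have h := expSqIntegral_add_le (μ := μ) hf (fun x => -g x) hβ.le (t := 1 / 2)
    (by norm_num) (by norm_num)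
  simp only [← sub_eq_add_neg, expSqIntegral_neg] at h
  exact ne_top_of_le_ne_top (add_ne_top.2 ⟨mul_ne_top ofReal_ne_top (hf_fin _ (by positivity)),
    mul_ne_top ofReal_ne_top (hg_fin _ (by positivity))⟩) h

lemma continuousAt_expSqIntegral {w : X → ℝ} (hw : Measurable w) {α β : ℝ} (hαβ : α < β)
    (hβ : expSqIntegral μ β w ≠ ⊤) : ContinuousAt (fun γ => expSqIntegral μ γ w) α := by
  refine tendsto_lintegral_filter_of_dominated_convergence _
    (.of_forall fun γ => measurable_expSq hw γ) ?_ hβ (ae_of_all _ fun x => ?_)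
  · filter_upwards [Iio_mem_nhds hαβ] with γ hγ
    exact ae_of_all _ fun x => ENNReal.ofReal_le_ofReal (by gcongr; exact hγ.le)
  · exact ENNReal.continuous_ofReal.continuousAt.comp (f := fun γ => Real.exp (γ * w x ^ 2) - 1)
      (by fun_prop)

lemma exists_pos_expSqIntegral_inv_sq_le_one {w : X → ℝ} (hw : Measurable w)
    (hfin : expSqIntegral μ 1 w ≠ ⊤) : ∃ k : ℝ, 0 < k ∧ expSqIntegral μ (k ^ 2)⁻¹ w ≤ 1 := by
  have hzero : Tendsto (fun β => expSqIntegral μ β w) (𝓝 0) (𝓝 0) := by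
    simpa [expSqIntegral] using (continuousAt_expSqIntegral hw one_pos hfin).tendsto
  have hinv : Tendsto (fun k : ℝ => (k ^ 2)⁻¹) atTop (𝓝 0) :=
    tendsto_inv_atTop_zero.comp (tendsto_pow_atTop two_ne_zero)
  exact (((hzero.comp hinv).eventually (ge_mem_nhds one_pos)).and (eventually_gt_atTop 0)).exists
    |>.imp fun _ h => ⟨h.2, h.1⟩

lemma expSqIntegral_le_of_luxNorm_lt {v : X → ℝ} (hv : Measurable v)
    (hfin : expSqIntegral μ 1 v ≠ ⊤) {β δ : ℝ} (hδ : luxNorm μ v < δ) (hβ : 0 ≤ β)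
    (hβδ : β * δ ^ 2 ≤ 1) : expSqIntegral μ β v ≤ ENNReal.ofReal (β * δ ^ 2) := by
  -- a member of the defining set: otherwise `luxNorm μ v` is the junk value `sInf ∅ = 0`
  obtain ⟨k₀, hk₀, hk₀v⟩ := exists_pos_expSqIntegral_inv_sq_le_one hv hfin
  simp only [luxNorm, lintegral_exp_div_sq] at hδ
  obtain ⟨k, ⟨hk, hkv⟩, hkδ⟩ := exists_lt_of_csInf_lt (by exact ⟨k₀, hk₀, hk₀v⟩) hδ
  calc expSqIntegral μ β v ≤ expSqIntegral μ (β * δ ^ 2 * (k ^ 2)⁻¹) v := by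
        refine expSqIntegral_mono ?_ v
        rw [mul_assoc, ← div_eq_mul_inv]
        exact le_mul_of_one_le_right hβ ((one_le_div (by positivity)).2 (by gcongr))
    _ ≤ ENNReal.ofReal (β * δ ^ 2) * expSqIntegral μ (k ^ 2)⁻¹ v :=
        expSqIntegral_mul_le (by positivity) hβδ _ v
    _ ≤ ENNReal.ofReal (β * δ ^ 2) := mul_le_of_le_one_right' hkv

lemma tendsto_expSqIntegral_zero_of_luxNorm {v : ℕ → X → ℝ} (hv : ∀ n, Measurable (v n))
    (hfin : ∀ n, expSqIntegral μ 1 (v n) ≠ ⊤)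
    (hlux : Tendsto (fun n => luxNorm μ (v n)) atTop (𝓝 0)) {β : ℝ} (hβ : 0 < β) :
    Tendsto (fun n => expSqIntegral μ β (v n)) atTop (𝓝 0) := by
  refine ENNReal.tendsto_nhds_zero.2 fun ε hε => ?_
  have hsq : Tendsto (fun δ : ℝ => β * δ ^ 2) (𝓝 0) (𝓝 0) := by
    simpa using (show Continuous fun δ : ℝ => β * δ ^ 2 by fun_prop).tendsto 0
  have hsmall : ∀ᶠ δ in 𝓝 (0 : ℝ), β * δ ^ 2 ≤ 1 ∧ ENNReal.ofReal (β * δ ^ 2) ≤ ε :=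
    (hsq.eventually (ge_mem_nhds one_pos)).and
      (ENNReal.tendsto_nhds_zero.1 (by simpa using ENNReal.tendsto_ofReal hsq) ε hε)
  obtain ⟨δ, ⟨hδ1, hδε⟩, hδ⟩ :=
    ((hsmall.filter_mono (nhdsWithin_le_nhds (s := Set.Ioi 0))).and self_mem_nhdsWithin).exists
  filter_upwards [hlux.eventually (gt_mem_nhds hδ)] with n hn
  exact (expSqIntegral_le_of_luxNorm_lt (hv n) (hfin n) hn hβ.le hδ1).trans hδε

end ExpSqIntegral

section Convergence

variable {X : Type*} [MeasurableSpace X] {μ : Measure X} {u : X → ℝ} {un : ℕ → X → ℝ}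
  {α t : ℝ}

lemma limsup_expSqIntegral_le (hu : Measurable u)
    (hsmall : Tendsto (fun n => expSqIntegral μ (α / t ^ 2) (fun x => un n x - u x)) atTop (𝓝 0))
    (hα : 0 ≤ α) (ht0 : 0 < t) (ht1 : t < 1) :
    limsup (fun n => expSqIntegral μ α (un n)) atTop ≤ expSqIntegral μ (α / (1 - t) ^ 2) u := by
  have hbound : ∀ n, expSqIntegral μ α (un n) ≤
      ENNReal.ofReal (1 - t) * expSqIntegral μ (α / (1 - t) ^ 2) u
        + ENNReal.ofReal t * expSqIntegral μ (α / t ^ 2) (fun x => un n x - u x) := fun n => by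
    simpa using expSqIntegral_add_le hu (fun x => un n x - u x) hα ht0 ht1
  have htail := ENNReal.Tendsto.const_mul hsmall (a := ENNReal.ofReal t) (Or.inr ofReal_ne_top)
  rw [mul_zero] at htail
  calc limsup (fun n => expSqIntegral μ α (un n)) atTop
      ≤ limsup ((fun _ => ENNReal.ofReal (1 - t) * expSqIntegral μ (α / (1 - t) ^ 2) u)
          + fun n => ENNReal.ofReal t * expSqIntegral μ (α / t ^ 2) (fun x => un n x - u x))
          atTop := limsup_le_limsup (.of_forall hbound)
    _ = ENNReal.ofReal (1 - t) * expSqIntegral μ (α / (1 - t) ^ 2) u := by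
        rw [ENNReal.limsup_add_of_right_tendsto_zero htail, limsup_const]
    _ ≤ expSqIntegral μ (α / (1 - t) ^ 2) u :=
        mul_le_of_le_one_left' (ofReal_le_one.2 (by linarith))

lemma expSqIntegral_le_liminf (hun : ∀ n, Measurable (un n))
    (hsmall : Tendsto (fun n => expSqIntegral μ (α * (1 - t) ^ 2 / t ^ 2) (fun x => un n x - u x))
      atTop (𝓝 0))
    (hα : 0 ≤ α) (ht0 : 0 < t) (ht1 : t < 1) :
    expSqIntegral μ (α * (1 - t) ^ 2) u ≤ liminf (fun n => expSqIntegral μ α (un n)) atTop := by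
  have hbound : ∀ n, expSqIntegral μ (α * (1 - t) ^ 2) u ≤ expSqIntegral μ α (un n)
      + ENNReal.ofReal t * expSqIntegral μ (α * (1 - t) ^ 2 / t ^ 2) (fun x => un n x - u x) := by
    intro n
    have h := expSqIntegral_add_le (μ := μ) (hun n) (fun x => u x - un n x)
      (β := α * (1 - t) ^ 2) (by positivity) ht0 ht1
    rw [mul_div_cancel_right₀ _ (pow_ne_zero 2 (sub_pos.2 ht1).ne'),
      expSqIntegral_sub_comm] at h
    simp only [add_sub_cancel] at h
    exact h.trans (by gcongr; exact mul_le_of_le_one_left' (ofReal_le_one.2 (by linarith)))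
  have htail := ENNReal.Tendsto.const_mul hsmall (a := ENNReal.ofReal t) (Or.inr ofReal_ne_top)
  rw [mul_zero] at htail
  calc expSqIntegral μ (α * (1 - t) ^ 2) u
      ≤ liminf ((fun n => expSqIntegral μ α (un n)) + fun n =>
          ENNReal.ofReal t * expSqIntegral μ (α * (1 - t) ^ 2 / t ^ 2) (fun x => un n x - u x))
          atTop := le_liminf_of_le (by isBoundedDefault) (.of_forall hbound)
    _ = liminf (fun n => expSqIntegral μ α (un n)) atTop :=
        ENNReal.liminf_add_of_right_tendsto_zero htail _

theorem tendsto_expSqIntegral_of_tendsto_sub (hu : Measurable u) (hun : ∀ n, Measurable (un n))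
    (hu_fin : ∀ β : ℝ, 0 < β → expSqIntegral μ β u ≠ ⊤)
    (hsmall : ∀ β : ℝ, 0 < β →
      Tendsto (fun n => expSqIntegral μ β (fun x => un n x - u x)) atTop (𝓝 0))
    (hα : 0 < α) :
    Tendsto (fun n => expSqIntegral μ α (un n)) atTop (𝓝 (expSqIntegral μ α u)) := by
  have hcont : ContinuousAt (fun β => expSqIntegral μ β u) α :=
    continuousAt_expSqIntegral hu (lt_two_mul_self hα) (hu_fin _ (by positivity))
  have hlower : Tendsto (fun t : ℝ => expSqIntegral μ (α * (1 - t) ^ 2) u) (𝓝[>] 0)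
      (𝓝 (expSqIntegral μ α u)) := by
    refine hcont.tendsto.comp (tendsto_nhdsWithin_of_tendsto_nhds ?_)
    simpa using (show Continuous fun t : ℝ => α * (1 - t) ^ 2 by fun_prop).tendsto 0
  have hupper : Tendsto (fun t : ℝ => expSqIntegral μ (α / (1 - t) ^ 2) u) (𝓝[>] 0)
      (𝓝 (expSqIntegral μ α u)) := by
    refine hcont.tendsto.comp (tendsto_nhdsWithin_of_tendsto_nhds ?_)
    simpa using (show ContinuousAt (fun t : ℝ => α / (1 - t) ^ 2) 0 by
      fun_prop (disch := norm_num)).tendsto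
  refine tendsto_of_le_liminf_of_limsup_le ?_ ?_
  · refine le_of_tendsto hlower ?_
    filter_upwards [Ioo_mem_nhdsGT one_pos] with t ⟨ht0, ht1⟩
    exact expSqIntegral_le_liminf hun (hsmall _ (by positivity)) hα.le ht0 ht1
  · refine ge_of_tendsto hupper ?_
    filter_upwards [Ioo_mem_nhdsGT one_pos] with t ⟨ht0, ht1⟩
    exact limsup_expSqIntegral_le hu (hsmall _ (by positivity)) hα.le ht0 ht1

end Convergence

theorem stmt_3_general {N : ℕ} (Ω : Set (EuclideanSpace ℝ (Fin N)))
    (u : EuclideanSpace ℝ (Fin N) → ℝ) (un : ℕ → EuclideanSpace ℝ (Fin N) → ℝ)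
    (hu : Measurable u) (hun : ∀ n, Measurable (un n))
    (huM : ∀ k : ℝ, 0 < k →
      ∫⁻ x in Ω, ENNReal.ofReal (Real.exp ((u x / k) ^ 2) - 1) < ⊤)
    (hunM : ∀ n, ∀ k : ℝ, 0 < k →
      ∫⁻ x in Ω, ENNReal.ofReal (Real.exp ((un n x / k) ^ 2) - 1) < ⊤)
    (hlux : Tendsto (fun n => luxNorm (volume.restrict Ω) (fun x => un n x - u x))
      atTop (nhds 0)) :
    ∀ α : ℝ, 0 < α →
      Tendsto (fun n => ∫⁻ x in Ω,
          ENNReal.ofReal (Real.exp (α * (un n x) ^ 2) - 1))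
        atTop (nhds (∫⁻ x in Ω, ENNReal.ofReal (Real.exp (α * (u x) ^ 2) - 1))) := by
  intro α hα
  have hu_fin := fun β (hβ : 0 < β) => expSqIntegral_ne_top_of_lintegral_div_sq_lt_top huM hβ
  have hun_fin := fun n β (hβ : 0 < β) =>
    expSqIntegral_ne_top_of_lintegral_div_sq_lt_top (hunM n) hβ
  have hsmall : ∀ β : ℝ, 0 < β → Tendsto
      (fun n => expSqIntegral (volume.restrict Ω) β (fun x => un n x - u x)) atTop (𝓝 0) :=
    fun β hβ => tendsto_expSqIntegral_zero_of_luxNorm (fun n => (hun n).sub hu)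
      (fun n => expSqIntegral_sub_ne_top (hun n) (hun_fin n) hu_fin one_pos) hlux hβ
  exact tendsto_expSqIntegral_of_tendsto_sub hu hun hu_fin hsmall hα

/-- Let Ω ⊆ ℝ^N be measurable, u ∈ 𝓜(Ω), and (u_n) ⊂ 𝓜(Ω) with ‖u_n − u‖_{𝓛(Ω)} → 0.
Then for every α > 0, ∫_Ω (e^{α u_n²} − 1) dx → ∫_Ω (e^{α u²} − 1) dx. -/
theorem stmt_3 {N : ℕ} (Ω : Set (EuclideanSpace ℝ (Fin N))) (hΩ : MeasurableSet Ω)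
    (u : EuclideanSpace ℝ (Fin N) → ℝ) (un : ℕ → EuclideanSpace ℝ (Fin N) → ℝ)
    (hu : Measurable u) (hun : ∀ n, Measurable (un n))
    (huM : ∀ k : ℝ, 0 < k →
      ∫⁻ x in Ω, ENNReal.ofReal (Real.exp ((u x / k) ^ 2) - 1) < ⊤)
    (hunM : ∀ n, ∀ k : ℝ, 0 < k →
      ∫⁻ x in Ω, ENNReal.ofReal (Real.exp ((un n x / k) ^ 2) - 1) < ⊤)
    (hlux : Tendsto (fun n => luxNorm (volume.restrict Ω) (fun x => un n x - u x))
      atTop (nhds 0)) :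
    ∀ α : ℝ, 0 < α →
      Tendsto (fun n => ∫⁻ x in Ω,
          ENNReal.ofReal (Real.exp (α * (un n x) ^ 2) - 1))
        atTop (nhds (∫⁻ x in Ω, ENNReal.ofReal (Real.exp (α * (u x) ^ 2) - 1))) :=
  stmt_3_general Ω u un hu hun huM hunM hlux
end

section
/- Let N ≥ 3 be an integer and 𝔶(θ) := 1 − N sin²θ, so that 𝔶′(θ) = −N sin(2θ). Then ∫₀^{π/2} (𝔶′(θ))² (cos θ)^{N−2} dθ = 2N ∫₀^{π/2} (𝔶(θ))² (cos θ)^{N−2} dθ; explicitly, ∫₀^{π/2} N² sin²(2θ) (cos θ)^{N−2} dθ = 2N ∫₀^{π/2} (1 − N sin²θ)² (cos θ)^{N−2} dθ. -/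
open Real MeasureTheory intervalIntegral

lemma J_rec (n : ℕ) :
    (∫ x in (0:ℝ)..(π/2), cos x ^ (n + 2)) =
      (n + 1) / (n + 2) * ∫ x in (0:ℝ)..(π/2), cos x ^ n := by
  rw [integral_cos_pow]
  simp [Real.cos_pi_div_two, Real.sin_zero]

/-- Let N ≥ 3 and 𝔶(θ) := 1 − N sin²θ, so 𝔶′(θ) = −N sin(2θ). Then
∫₀^{π/2} (𝔶′)² (cos θ)^{N−2} dθ = 2N ∫₀^{π/2} 𝔶² (cos θ)^{N−2} dθ, i.e.
∫₀^{π/2} N² sin²(2θ)(cos θ)^{N−2} dθ = 2N ∫₀^{π/2} (1 − N sin²θ)² (cos θ)^{N−2} dθ. -/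
theorem stmt_11 (N : ℕ) (hN : 3 ≤ N) :
    ∫ θ in Set.Ioo (0 : ℝ) (π / 2),
        (N : ℝ) ^ 2 * Real.sin (2 * θ) ^ 2 * Real.cos θ ^ (N - 2) =
      2 * (N : ℝ) * ∫ θ in Set.Ioo (0 : ℝ) (π / 2),
        (1 - (N : ℝ) * Real.sin θ ^ 2) ^ 2 * Real.cos θ ^ (N - 2) := by
  obtain ⟨k, rfl⟩ : ∃ k, N = k + 3 := ⟨N - 3, by omega⟩
  have hk : k + 3 - 2 = k + 1 := by omega
  rw [hk]
  have hIoo : ∀ f : ℝ → ℝ, (∫ θ in Set.Ioo (0:ℝ) (π/2), f θ) = ∫ θ in (0:ℝ)..(π/2), f θ := by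
    intro f
    rw [intervalIntegral.integral_of_le (by positivity : (0:ℝ) ≤ π/2),
      MeasureTheory.integral_Ioc_eq_integral_Ioo]
  rw [hIoo, hIoo]
  set J : ℕ → ℝ := fun n => ∫ x in (0:ℝ)..(π/2), cos x ^ n with hJ
  have hint : ∀ n : ℕ, IntervalIntegrable (fun x => Real.cos x ^ n) volume 0 (π/2) :=
    fun n => (Continuous.pow Real.continuous_cos n).intervalIntegrable _ _
  have h1 : (∫ θ in (0:ℝ)..(π/2), ((k:ℝ)+3) ^ 2 * Real.sin (2*θ) ^ 2 * Real.cos θ ^ (k+1))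
      = 4*((k:ℝ)+3)^2 * (J (k+3) - J (k+5)) := by
    rw [hJ]
    rw [← intervalIntegral.integral_sub (hint _) (hint _),
      ← intervalIntegral.integral_const_mul]
    apply intervalIntegral.integral_congr
    intro x _
    have hs : Real.sin (2*x) = 2 * Real.sin x * Real.cos x := Real.sin_two_mul x
    have h2 : Real.sin x ^ 2 = 1 - Real.cos x ^ 2 := Real.sin_sq x
    simp only [hs]
    ring_nf
    rw [h2]
    ring
  have h2 : (∫ θ in (0:ℝ)..(π/2), (1 - ((k:ℝ)+3) * Real.sin θ ^ 2) ^ 2 * Real.cos θ ^ (k+1))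
      = ((k:ℝ)+2)^2 * J (k+1) - 2*((k:ℝ)+3)*((k:ℝ)+2) * J (k+3) + ((k:ℝ)+3)^2 * J (k+5) := by
    rw [hJ]
    rw [← intervalIntegral.integral_const_mul, ← intervalIntegral.integral_const_mul,
      ← intervalIntegral.integral_const_mul,
      ← intervalIntegral.integral_sub ((hint _).const_mul _) ((hint _).const_mul _),
      ← intervalIntegral.integral_add (((hint _).const_mul _).sub ((hint _).const_mul _))
        ((hint _).const_mul _)]
    apply intervalIntegral.integral_congr
    intro x _
    have h2 : Real.sin x ^ 2 = 1 - Real.cos x ^ 2 := Real.sin_sq x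
    simp only [h2]
    ring
  push_cast
  rw [h1, h2]
  have r1 : J (k+3) = ((k:ℝ)+2)/((k:ℝ)+3) * J (k+1) := by
    have := J_rec (k+1); push_cast at this ⊢; convert this using 3 <;> ring
  have r2 : J (k+5) = ((k:ℝ)+4)/((k:ℝ)+5) * J (k+3) := by
    have := J_rec (k+3); push_cast at this ⊢; convert this using 3 <;> ring
  rw [r2, r1]
  have h3 : ((k:ℝ)+3) ≠ 0 := by positivity
  have h5 : ((k:ℝ)+5) ≠ 0 := by positivity
  field_simp
  ring
end
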